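/- (Reidemeister II move on Gauss codes preserves parity of pre-existing crossings.) Let G = P ++ Q ++ R be a signed Gauss code, let i and j be two distinct labels not occurring in G, and let G' = P ++ [e₁, e₂] ++ Q ++ [e₃, e₄] ++ R, where {e₁, e₂} consists of one entry with label i and one with label j, and {e₃, e₄} consists of the complementary occurrences of i and j (so that in G' each of i and j occurs exactly twice, once as understrand and once as overstrand, each with the same sign at both of its occurrences). Then every crossing of G is a crossing of G', and it has the same parity in G' as in G. -/
import Mathlib


/-- The marker recording whether an entry of a Gauss code lies on the
understrand (`u`) or overstrand (`o`) of the crossing. -/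
inductive Strand : Type
  | u : Strand
  | o : Strand
deriving DecidableEq

/-- The sign of a crossing. -/
inductive GSign : Type
  | pos : GSign
  | neg : GSign
deriving DecidableEq

/-- An entry `(ℓ, m, ε)` of a signed Gauss code: a label, a strand marker, and a sign.
A signed Gauss code is a `List (GaussEntry L)`. -/
abbrev GaussEntry (L : Type u) : Type u := L × Strand × GSign

/-- A label `ℓ` is a crossing of the signed Gauss code `G` if it occurs in exactly two
entries of `G`, once with marker `u` and once with marker `o`, both with the same sign. -/
def IsCrossing {L : Type u} [DecidableEq L] (G : List (GaussEntry L)) (ℓ : L) : Prop :=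
  G.countP (fun e => decide (e.1 = ℓ)) = 2 ∧
  ∃ ε : GSign, (ℓ, Strand.u, ε) ∈ G ∧ (ℓ, Strand.o, ε) ∈ G

/-- The number of entries of `G` lying strictly between the two occurrences of the
label `ℓ` (for `ℓ` occurring exactly twice in `G`). -/
def betweenCount {L : Type u} [DecidableEq L] (G : List (GaussEntry L)) (ℓ : L) : ℕ :=
  (G.drop (G.findIdx (fun e => decide (e.1 = ℓ)) + 1)).findIdx (fun e => decide (e.1 = ℓ))

/-- The parity of the crossing `ℓ` in `G`: the residue mod 2 of the number of entries of
`G` lying strictly between the two occurrences of `ℓ` (`0` = even, `1` = odd). -/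
def crossingParity {L : Type u} [DecidableEq L] (G : List (GaussEntry L)) (ℓ : L) : ℕ :=
  betweenCount G ℓ % 2


private lemma findIdx_prefix {α : Type*} (p : α → Bool) (A : List α) (x : α) (t : List α)
    (hA : ∀ e ∈ A, p e = false) (hx : p x = true) :
    (A ++ x :: t).findIdx p = A.length := by
  induction A with
  | nil => simp [List.findIdx_cons, hx]
  | cons a A ih =>
    simp [List.findIdx_cons, hA a (by simp), ih (fun e he => hA e (by simp [he]))]

private lemma bc_eq {L : Type*} [DecidableEq L] (A B C : List (GaussEntry L))
    (x y : GaussEntry L) (ℓ : L)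
    (hA : ∀ e ∈ A, e.1 ≠ ℓ) (hB : ∀ e ∈ B, e.1 ≠ ℓ) (hx : x.1 = ℓ) (hy : y.1 = ℓ) :
    betweenCount (A ++ x :: (B ++ y :: C)) ℓ = B.length := by
  unfold betweenCount
  rw [findIdx_prefix _ A x _ (fun e he => by simp [hA e he]) (by simp [hx])]
  rw [show A.length + 1 = (A ++ [x]).length by simp,
      show A ++ x :: (B ++ y :: C) = (A ++ [x]) ++ (B ++ y :: C) by simp,
      List.drop_left]
  exact findIdx_prefix _ B y C (fun e he => by simp [hB e he]) (by simp [hy])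

private lemma split_one {α : Type*} (p : α → Bool) : ∀ (S : List α), S.countP p = 1 →
    ∃ A x B, S = A ++ x :: B ∧ p x = true ∧ A.countP p = 0 ∧ B.countP p = 0 := by
  intro S
  induction S with
  | nil => simp
  | cons a t ih =>
    intro h
    rw [List.countP_cons] at h
    by_cases hpa : p a = true
    · refine ⟨[], a, t, by simp, hpa, by simp, ?_⟩
      simp only [hpa, if_true] at h
      omega
    · simp [hpa] at h
      obtain ⟨A, x, B, h1, h2, h3, h4⟩ := ih h
      exact ⟨a :: A, x, B, by simp [h1], h2, by simp [List.countP_cons, hpa, h3], h4⟩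

private lemma split_two {α : Type*} (p : α → Bool) : ∀ (S : List α), S.countP p = 2 →
    ∃ A x B y C, S = A ++ x :: (B ++ y :: C) ∧ p x = true ∧ p y = true ∧
      A.countP p = 0 ∧ B.countP p = 0 ∧ C.countP p = 0 := by
  intro S
  induction S with
  | nil => simp
  | cons a t ih =>
    intro h
    rw [List.countP_cons] at h
    by_cases hpa : p a = true
    · simp [hpa] at h
      obtain ⟨B, y, C, h1, h2, h3, h4⟩ := split_one p t (by omega)
      exact ⟨[], a, B, y, C, by simp [h1], hpa, h2, by simp, h3, h4⟩
    · simp [hpa] at h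
      obtain ⟨A, x, B, y, C, h1, h2, h3, h4, h5, h6⟩ := ih h
      exact ⟨a :: A, x, B, y, C, by simp [h1], h2, h3,
        by simp [List.countP_cons, hpa, h4], h5, h6⟩

private lemma no_of_zero {L : Type*} [DecidableEq L] {X : List (GaussEntry L)} {ℓ : L}
    (h : X.countP (fun e => decide (e.1 = ℓ)) = 0) : ∀ e ∈ X, e.1 ≠ ℓ := by
  intro e he
  have := List.countP_eq_zero.mp h e he
  simpa using this

/-- (Reidemeister II on Gauss codes preserves parity of pre-existing
crossings.) Let `G = P ++ Q ++ R` and let `G' = P ++ [e₁, e₂] ++ Q ++ [e₃, e₄] ++ R` where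
`{e₁, e₂}` consists of one entry labeled `i` and one labeled `j` (two fresh distinct
labels) and `{e₃, e₄}` consists of the complementary occurrences of `i` and `j`, so that
`i` and `j` are crossings of `G'`. Then every crossing of `G` is a crossing of `G'` with
the same parity. -/
theorem reidemeister_II_preserves_parity {L : Type*} [DecidableEq L]
    (P Q R : List (GaussEntry L)) (i j : L) (hij : i ≠ j)
    (hfreshi : ∀ e ∈ P ++ Q ++ R, e.1 ≠ i) (hfreshj : ∀ e ∈ P ++ Q ++ R, e.1 ≠ j)
    (e₁ e₂ e₃ e₄ : GaussEntry L)
    (h12 : (e₁.1 = i ∧ e₂.1 = j) ∨ (e₁.1 = j ∧ e₂.1 = i))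
    (h34 : (e₃.1 = i ∧ e₄.1 = j) ∨ (e₃.1 = j ∧ e₄.1 = i))
    (G G' : List (GaussEntry L))
    (hG : G = P ++ Q ++ R)
    (hG' : G' = P ++ [e₁, e₂] ++ Q ++ [e₃, e₄] ++ R)
    (hci : IsCrossing G' i) (hcj : IsCrossing G' j) :
    ∀ ℓ : L, IsCrossing G ℓ → IsCrossing G' ℓ ∧ crossingParity G' ℓ = crossingParity G ℓ := by
  intro ℓ hℓ
  obtain ⟨hcount, ε, hu, ho⟩ := hℓ
  have hℓi : ℓ ≠ i := hfreshi (ℓ, Strand.u, ε) (hG ▸ hu)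
  have hℓj : ℓ ≠ j := hfreshj (ℓ, Strand.u, ε) (hG ▸ hu)
  set p : GaussEntry L → Bool := fun e => decide (e.1 = ℓ) with hp
  have he₁ : e₁.1 ≠ ℓ := by
    rcases h12 with ⟨h, _⟩ | ⟨h, _⟩
    · exact h ▸ Ne.symm hℓi
    · exact h ▸ Ne.symm hℓj
  have he₂ : e₂.1 ≠ ℓ := by
    rcases h12 with ⟨_, h⟩ | ⟨_, h⟩
    · exact h ▸ Ne.symm hℓj
    · exact h ▸ Ne.symm hℓi
  have he₃ : e₃.1 ≠ ℓ := by
    rcases h34 with ⟨h, _⟩ | ⟨h, _⟩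
    · exact h ▸ Ne.symm hℓi
    · exact h ▸ Ne.symm hℓj
  have he₄ : e₄.1 ≠ ℓ := by
    rcases h34 with ⟨_, h⟩ | ⟨_, h⟩
    · exact h ▸ Ne.symm hℓj
    · exact h ▸ Ne.symm hℓi
  have hcount' : G'.countP p = 2 := by
    rw [hG'] at *
    rw [hG] at hcount
    simp only [List.countP_append, List.countP_cons, List.countP_nil, hp] at hcount ⊢
    simp [he₁, he₂, he₃, he₄]
    omega
  have hcross' : IsCrossing G' ℓ := by
    refine ⟨hcount', ε, ?_, ?_⟩ <;> [have hm := hu; have hm := ho] <;>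
      rw [hG] at hm <;> rw [hG'] <;> simp only [List.mem_append] at hm ⊢ <;> tauto
  refine ⟨hcross', ?_⟩
  have hsum : P.countP p + Q.countP p + R.countP p = 2 := by
    rw [hG, List.countP_append, List.countP_append] at hcount; exact hcount
  have hcases : (P.countP p = 2 ∧ Q.countP p = 0 ∧ R.countP p = 0) ∨
      (Q.countP p = 2 ∧ P.countP p = 0 ∧ R.countP p = 0) ∨
      (R.countP p = 2 ∧ P.countP p = 0 ∧ Q.countP p = 0) ∨
      (P.countP p = 1 ∧ Q.countP p = 1 ∧ R.countP p = 0) ∨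
      (P.countP p = 1 ∧ R.countP p = 1 ∧ Q.countP p = 0) ∨
      (Q.countP p = 1 ∧ R.countP p = 1 ∧ P.countP p = 0) := by omega
  unfold crossingParity
  rcases hcases with ⟨h2, hQ0, hR0⟩ | ⟨h2, hP0, hR0⟩ | ⟨h2, hP0, hQ0⟩ |
      ⟨hP1, hQ1, hR0⟩ | ⟨hP1, hR1, hQ0⟩ | ⟨hQ1, hR1, hP0⟩
  · -- both in P
    obtain ⟨A, x, B, y, C, hs, hx, hy, hA0, hB0, hC0⟩ := split_two p P h2
    have hgb : betweenCount G ℓ = B.length := by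
      rw [show G = A ++ x :: (B ++ y :: (C ++ Q ++ R)) by simp [hG, hs]]
      exact bc_eq A B _ x y ℓ (no_of_zero hA0) (no_of_zero hB0)
        (by simpa [hp] using hx) (by simpa [hp] using hy)
    have hgb' : betweenCount G' ℓ = B.length := by
      rw [show G' = A ++ x :: (B ++ y :: (C ++ e₁ :: e₂ :: Q ++ e₃ :: e₄ :: R)) by
        simp [hG', hs]]
      exact bc_eq A B _ x y ℓ (no_of_zero hA0) (no_of_zero hB0)
        (by simpa [hp] using hx) (by simpa [hp] using hy)
    rw [hgb, hgb']
  · -- both in Q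
    obtain ⟨A, x, B, y, C, hs, hx, hy, hA0, hB0, hC0⟩ := split_two p Q h2
    have hAn : ∀ e ∈ P ++ A, e.1 ≠ ℓ := by
      intro e he; rcases List.mem_append.mp he with h | h
      exacts [no_of_zero hP0 e h, no_of_zero hA0 e h]
    have hgb : betweenCount G ℓ = B.length := by
      rw [show G = (P ++ A) ++ x :: (B ++ y :: (C ++ R)) by simp [hG, hs]]
      exact bc_eq (P ++ A) B _ x y ℓ hAn (no_of_zero hB0)
        (by simpa [hp] using hx) (by simpa [hp] using hy)
    have hgb' : betweenCount G' ℓ = B.length := by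
      rw [show G' = (P ++ e₁ :: e₂ :: A) ++ x :: (B ++ y :: (C ++ e₃ :: e₄ :: R)) by
        simp [hG', hs]]
      refine bc_eq _ B _ x y ℓ ?_ (no_of_zero hB0) (by simpa [hp] using hx) (by simpa [hp] using hy)
      intro e he
      simp only [List.mem_append, List.mem_cons] at he
      rcases he with h | h | h | h
      exacts [no_of_zero hP0 e h, h ▸ he₁, h ▸ he₂, no_of_zero hA0 e h]
    rw [hgb, hgb']
  · -- both in R
    obtain ⟨A, x, B, y, C, hs, hx, hy, hA0, hB0, hC0⟩ := split_two p R h2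
    have hgb : betweenCount G ℓ = B.length := by
      rw [show G = (P ++ Q ++ A) ++ x :: (B ++ y :: C) by simp [hG, hs]]
      refine bc_eq _ B _ x y ℓ ?_ (no_of_zero hB0) (by simpa [hp] using hx) (by simpa [hp] using hy)
      intro e he
      simp only [List.mem_append] at he
      rcases he with (h | h) | h
      exacts [no_of_zero hP0 e h, no_of_zero hQ0 e h, no_of_zero hA0 e h]
    have hgb' : betweenCount G' ℓ = B.length := by
      rw [show G' = (P ++ e₁ :: e₂ :: Q ++ e₃ :: e₄ :: A) ++ x :: (B ++ y :: C) by
        simp [hG', hs]]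
      refine bc_eq _ B _ x y ℓ ?_ (no_of_zero hB0) (by simpa [hp] using hx) (by simpa [hp] using hy)
      intro e he
      simp only [List.mem_append, List.mem_cons] at he
      rcases he with (h | h | h | h) | h | h | h
      exacts [no_of_zero hP0 e h, h ▸ he₁, h ▸ he₂, no_of_zero hQ0 e h,
        h ▸ he₃, h ▸ he₄, no_of_zero hA0 e h]
    rw [hgb, hgb']
  · -- one in P, one in Q
    obtain ⟨A, x, B, hs1, hx, hA0, hB0⟩ := split_one p P hP1
    obtain ⟨C, y, D, hs2, hy, hC0, hD0⟩ := split_one p Q hQ1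
    have hgb : betweenCount G ℓ = (B ++ C).length := by
      rw [show G = A ++ x :: ((B ++ C) ++ y :: (D ++ R)) by simp [hG, hs1, hs2]]
      refine bc_eq A (B ++ C) _ x y ℓ (no_of_zero hA0) ?_
        (by simpa [hp] using hx) (by simpa [hp] using hy)
      intro e he; rcases List.mem_append.mp he with h | h
      exacts [no_of_zero hB0 e h, no_of_zero hC0 e h]
    have hgb' : betweenCount G' ℓ = (B ++ e₁ :: e₂ :: C).length := by
      rw [show G' = A ++ x :: ((B ++ e₁ :: e₂ :: C) ++ y :: (D ++ e₃ :: e₄ :: R)) by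
        simp [hG', hs1, hs2]]
      refine bc_eq A _ _ x y ℓ (no_of_zero hA0) ?_ (by simpa [hp] using hx) (by simpa [hp] using hy)
      intro e he
      simp only [List.mem_append, List.mem_cons] at he
      rcases he with h | h | h | h
      exacts [no_of_zero hB0 e h, h ▸ he₁, h ▸ he₂, no_of_zero hC0 e h]
    rw [hgb, hgb']; simp; omega
  · -- one in P, one in R
    obtain ⟨A, x, B, hs1, hx, hA0, hB0⟩ := split_one p P hP1
    obtain ⟨C, y, D, hs2, hy, hC0, hD0⟩ := split_one p R hR1
    have hgb : betweenCount G ℓ = (B ++ Q ++ C).length := by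
      rw [show G = A ++ x :: ((B ++ Q ++ C) ++ y :: D) by simp [hG, hs1, hs2]]
      refine bc_eq A _ _ x y ℓ (no_of_zero hA0) ?_ (by simpa [hp] using hx) (by simpa [hp] using hy)
      intro e he
      simp only [List.mem_append] at he
      rcases he with (h | h) | h
      exacts [no_of_zero hB0 e h, no_of_zero hQ0 e h, no_of_zero hC0 e h]
    have hgb' : betweenCount G' ℓ = (B ++ e₁ :: e₂ :: Q ++ e₃ :: e₄ :: C).length := by
      rw [show G' = A ++ x :: ((B ++ e₁ :: e₂ :: Q ++ e₃ :: e₄ :: C) ++ y :: D) by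
        simp [hG', hs1, hs2]]
      refine bc_eq A _ _ x y ℓ (no_of_zero hA0) ?_ (by simpa [hp] using hx) (by simpa [hp] using hy)
      intro e he
      simp only [List.mem_append, List.mem_cons] at he
      rcases he with (h | h | h | h) | h | h | h
      exacts [no_of_zero hB0 e h, h ▸ he₁, h ▸ he₂, no_of_zero hQ0 e h,
        h ▸ he₃, h ▸ he₄, no_of_zero hC0 e h]
    rw [hgb, hgb']; simp; omega
  · -- one in Q, one in R
    obtain ⟨A, x, B, hs1, hx, hA0, hB0⟩ := split_one p Q hQ1
    obtain ⟨C, y, D, hs2, hy, hC0, hD0⟩ := split_one p R hR1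
    have hgb : betweenCount G ℓ = (B ++ C).length := by
      rw [show G = (P ++ A) ++ x :: ((B ++ C) ++ y :: D) by simp [hG, hs1, hs2]]
      refine bc_eq _ _ _ x y ℓ ?_ ?_ (by simpa [hp] using hx) (by simpa [hp] using hy)
      · intro e he; rcases List.mem_append.mp he with h | h
        exacts [no_of_zero hP0 e h, no_of_zero hA0 e h]
      · intro e he; rcases List.mem_append.mp he with h | h
        exacts [no_of_zero hB0 e h, no_of_zero hC0 e h]
    have hgb' : betweenCount G' ℓ = (B ++ e₃ :: e₄ :: C).length := by
      rw [show G' = (P ++ e₁ :: e₂ :: A) ++ x :: ((B ++ e₃ :: e₄ :: C) ++ y :: D) by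
        simp [hG', hs1, hs2]]
      refine bc_eq _ _ _ x y ℓ ?_ ?_ (by simpa [hp] using hx) (by simpa [hp] using hy)
      · intro e he
        simp only [List.mem_append, List.mem_cons] at he
        rcases he with h | h | h | h
        exacts [no_of_zero hP0 e h, h ▸ he₁, h ▸ he₂, no_of_zero hA0 e h]
      · intro e he
        simp only [List.mem_append, List.mem_cons] at he
        rcases he with h | h | h | h
        exacts [no_of_zero hB0 e h, h ▸ he₃, h ▸ he₄, no_of_zero hC0 e h]
    rw [hgb, hgb']; simp; omega
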